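/- Let $N \ge 2$ and $\gamma \le 1$, and let $\alpha < \frac{1}{4} - (1-\gamma)^2$ with $\alpha \le 1/4$; set $\delta_\alpha = (\sqrt{1-4\alpha}-1)/2$ and $u_\alpha(x) = |x|^{(2-N)/2}|\log|x||^{-\delta_\alpha}$. Then for every $R \in (0,1)$, $\int_{B_R} |x|^{-2}|\log|x||^{-2\gamma}|u_\alpha(x)|^2\,dx < \infty$, whereas if $\alpha \ge \frac14 - (1-\gamma)^2$ this integral is infinite. -/

import Mathlib

/-!
In polar coordinates the integrand depends on `r = |x|` only, and the Jacobian `r ^ (N - 1)`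
cancels the powers of `r` down to `r⁻¹ |log r| ^ (-(2γ + 2δ))`. The substitution `r = exp (-t)`
turns this into `t ^ (-(2γ + 2δ))` on a half-line `(c, ∞)`, integrable iff `2γ + 2δ > 1`, and
since `2 - 2γ ≥ 0` this is equivalent to `(2 - 2γ) ^ 2 < 1 - 4α`.
-/

open MeasureTheory Set Metric

lemma integrableOn_Ioo_inv_mul_neg_log_rpow_iff {R : ℝ} (hR0 : 0 < R) (hR1 : R < 1) (q : ℝ) :
    IntegrableOn (fun r : ℝ => r⁻¹ * (-Real.log r) ^ (-q)) (Ioo 0 R) ↔ 1 < q := by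
  have hlogR : 0 < -Real.log R := neg_pos.2 (Real.log_neg hR0 hR1)
  have himage : (fun t => Real.exp (-t)) '' Ioi (-Real.log R) = Ioo 0 R := by
    ext r
    constructor
    · rintro ⟨t, ht, rfl⟩
      exact ⟨Real.exp_pos _, by rw [← Real.exp_log hR0, Real.exp_lt_exp]; linarith [mem_Ioi.1 ht]⟩
    · rintro ⟨hr0, hrR⟩
      exact ⟨-Real.log r, neg_lt_neg (Real.log_lt_log hr0 hrR), by simp [Real.exp_log hr0]⟩
  have hderiv : ∀ t ∈ Ioi (-Real.log R),
      HasDerivWithinAt (fun t => Real.exp (-t)) (-Real.exp (-t)) (Ioi (-Real.log R)) t :=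
    fun t _ => by simpa using (hasDerivAt_neg t).exp.hasDerivWithinAt
  have hinj : InjOn (fun t => Real.exp (-t)) (Ioi (-Real.log R)) :=
    fun a _ b _ h => neg_injective (Real.exp_injective h)
  rw [← himage, integrableOn_image_iff_integrableOn_abs_deriv_smul measurableSet_Ioi hderiv hinj,
    integrableOn_congr_fun (g := fun t => t ^ (-q)) (fun t _ => ?_) measurableSet_Ioi,
    integrableOn_Ioi_rpow_iff hlogR, neg_lt_neg_iff]
  simp [Real.exp_ne_zero]

lemma pow_pred_smul_weighted_sq_eq {N : ℕ} (hN : 1 ≤ N) {r L : ℝ} (hr : 0 < r) (hL : 0 < L)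
    (γ δ : ℝ) :
    r ^ (N - 1) • ((r ^ 2)⁻¹ * L ^ (-2 * γ) * (r ^ ((2 - (N : ℝ)) / 2) * L ^ (-δ)) ^ 2) =
      r⁻¹ * L ^ (-(2 * γ + 2 * δ)) := by
  have hr_pow : r ^ (N - 1) * (r ^ ((2 - (N : ℝ)) / 2)) ^ 2 = r := by
    rw [← Real.rpow_natCast, ← Real.rpow_natCast, ← Real.rpow_mul hr.le, ← Real.rpow_add hr,
      Nat.cast_sub hN]
    norm_num
  have hL_pow : (L ^ (-δ)) ^ 2 = L ^ (-2 * δ) := by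
    rw [← Real.rpow_natCast, ← Real.rpow_mul hL.le]
    ring_nf
  rw [smul_eq_mul, neg_add, Real.rpow_add hL, mul_pow, hL_pow]
  field_simp
  linear_combination hr_pow

lemma one_lt_two_mul_add_sqrt_sub_one_iff {γ α : ℝ} (hγ : γ ≤ 1) :
    1 < 2 * γ + 2 * ((Real.sqrt (1 - 4 * α) - 1) / 2) ↔ α < 1 / 4 - (1 - γ) ^ 2 := by
  have h := Real.lt_sqrt (x := 2 - 2 * γ) (y := 1 - 4 * α) (by linarith)
  constructor
  · intro hlt
    nlinarith [h.1 (by linarith)]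
  · intro hlt
    linarith [h.2 (by nlinarith)]

theorem explicit_solution_integrability_general {N : ℕ} (hN : 2 ≤ N) (γ α : ℝ)
    (hγ : γ ≤ 1)
    (δ : ℝ) (hδ : δ = (Real.sqrt (1 - 4 * α) - 1) / 2)
    (u : EuclideanSpace ℝ (Fin N) → ℝ)
    (hu : ∀ x, u x = ‖x‖ ^ ((2 - (N : ℝ)) / 2) * (-Real.log ‖x‖) ^ (-δ))
    (R : ℝ) (hR0 : 0 < R) (hR1 : R < 1) :
    IntegrableOn
        (fun x => (‖x‖ ^ 2)⁻¹ * (-Real.log ‖x‖) ^ (-2 * γ) * (u x) ^ 2)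
        (ball (0 : EuclideanSpace ℝ (Fin N)) R \ {0}) volume ↔
      α < 1 / 4 - (1 - γ) ^ 2 := by
  have : Nontrivial (EuclideanSpace ℝ (Fin N)) :=
    Module.nontrivial_of_finrank_pos (R := ℝ) (by rw [finrank_euclideanSpace_fin]; omega)
  simp_rw [hu]
  rw [integrableOn_congr_set_ae (sdiff_null_ae_eq_self (measure_singleton 0)),
    integrableOn_fun_norm_addHaar volume (f := fun r => (r ^ 2)⁻¹ * (-Real.log r) ^ (-2 * γ) *
      (r ^ ((2 - (N : ℝ)) / 2) * (-Real.log r) ^ (-δ)) ^ 2), finrank_euclideanSpace_fin,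
    integrableOn_congr_fun (fun r hr => pow_pred_smul_weighted_sq_eq (by omega) hr.1
      (neg_pos.2 (Real.log_neg hr.1 (hr.2.trans hR1))) γ δ) measurableSet_Ioo,
    integrableOn_Ioo_inv_mul_neg_log_rpow_iff hR0 hR1, hδ]
  exact one_lt_two_mul_add_sqrt_sub_one_iff hγ

/-- Weighted integrability threshold for the explicit solution
`u_α(x) = |x|^{(2-N)/2}|log|x||^{-δ_α}`: the weighted `L²` norm on a ball `B_R`,
`R < 1`, is finite precisely when `α < 1/4 - (1-γ)²`. -/
theorem explicit_solution_integrability {N : ℕ} (hN : 2 ≤ N) (γ α : ℝ)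
    (hγ : γ ≤ 1) (hα : α ≤ 1 / 4)
    (δ : ℝ) (hδ : δ = (Real.sqrt (1 - 4 * α) - 1) / 2)
    (u : EuclideanSpace ℝ (Fin N) → ℝ)
    (hu : ∀ x, u x = ‖x‖ ^ ((2 - (N : ℝ)) / 2) * (-Real.log ‖x‖) ^ (-δ))
    (R : ℝ) (hR0 : 0 < R) (hR1 : R < 1) :
    IntegrableOn
        (fun x => (‖x‖ ^ 2)⁻¹ * (-Real.log ‖x‖) ^ (-2 * γ) * (u x) ^ 2)
        (ball (0 : EuclideanSpace ℝ (Fin N)) R \ {0}) volume ↔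
      α < 1 / 4 - (1 - γ) ^ 2 :=
  explicit_solution_integrability_general hN γ α hγ δ hδ u hu R hR0 hR1
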